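/- Let F be a finite field with q elements where q ≡ 5 (mod 8). If (a₀,b₀) ∈ S_F^{adv_2} and b₁ ∈ F satisfies b₁² = a₀b₀, and a₁ = (a₀+b₀)/2, then exactly one of the two children (a₁,b₁) and (a₁,−b₁) of (a₀,b₀) lies in S_F^{adv_2}. -/

import Mathlib

namespace AGM

variable {K : Type*} [Field K]

/-- A node `(a,b)` is nontrivial if `a`, `b`, `a+b`, `a-b` are all nonzero. -/
def Nontriv (p : K × K) : Prop :=
  p.1 ≠ 0 ∧ p.2 ≠ 0 ∧ p.1 + p.2 ≠ 0 ∧ p.1 - p.2 ≠ 0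

/-- AGM advancement between nontrivial nodes: `2c = a + b` and `d² = ab`. -/
def Adv (p q : K × K) : Prop :=
  Nontriv p ∧ Nontriv q ∧ 2 * q.1 = p.1 + p.2 ∧ q.2 ^ 2 = p.1 * p.2

/-- `AdvN n p`: there is a chain of `n` successive AGM advancements through
nontrivial nodes starting at `p`. -/
def AdvN : ℕ → K × K → Prop
  | 0, p => Nontriv p
  | n + 1, p => ∃ q, Adv p q ∧ AdvN n q

/-- `BackN n p`: there is a chain of `n` successive AGM advancements through
nontrivial nodes ending at `p`. -/
def BackN : ℕ → K × K → Prop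
  | 0, p => Nontriv p
  | n + 1, p => ∃ q, Adv q p ∧ BackN n q

/-- Indefinitely advanceable nodes. -/
def AdvInf (p : K × K) : Prop := ∀ n, AdvN n p

/-- Indefinitely backtrackable nodes. -/
def BackInf (p : K × K) : Prop := ∀ n, BackN n p

/-- Nontrivial k-values: `k ∉ {0, 1, -1}`. -/
def Tk (k : K) : Prop := k ≠ 0 ∧ k ≠ 1 ∧ k ≠ -1

/-- k-advancement: `(1+k₁)² k₂² = 4 k₁` for nontrivial k-values. -/
def kAdv (k₁ k₂ : K) : Prop := Tk k₁ ∧ Tk k₂ ∧ (1 + k₁) ^ 2 * k₂ ^ 2 = 4 * k₁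

/-- `TAdvN n k`: a chain of `n` k-advancements within `T_K` starting at `k`. -/
def TAdvN : ℕ → K → Prop
  | 0, k => Tk k
  | n + 1, k => ∃ k₂, kAdv k k₂ ∧ TAdvN n k₂

/-- `TBackN n k`: a chain of `n` k-advancements within `T_K` ending at `k`. -/
def TBackN : ℕ → K → Prop
  | 0, k => Tk k
  | n + 1, k => ∃ k₁, kAdv k₁ k ∧ TBackN n k₁

/-- Indefinitely advanceable k-values. -/
def TAdvInf (k : K) : Prop := ∀ n, TAdvN n k

/-- Indefinitely backtrackable k-values. -/
def TBackInf (k : K) : Prop := ∀ n, TBackN n k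

end AGM

/-!
Write `c = (a + b)/2` and let `f² = ab`. Since `-1` is a square, the sign of `f` is irrelevant, and a
nontrivial node `(a, b)` is twice advanceable exactly when `c f` is a square. For the two children
`(a₁, ±b₁)` of `(a₀, b₀)` the corresponding elements are `((a₁ + b₁)/2) f` and `((a₁ - b₁)/2) (i f)`,
where `f² = a₁ b₁` and `i² = -1`. Their product is `i · ((a₀ - b₀) f / 4)²`, because
`a₁² - b₁² = (a₀ - b₀)²/4`. When `q ≡ 5 (mod 8)`, `i` is not a square (since `(1 + i)² = 2i` and `2`
is not a square), so exactly one of the two factors is a square.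
-/

theorem IsSquare.isSquare_neg_iff {R : Type*} [CommRing R] (h : IsSquare (-1 : R)) {a : R} :
    IsSquare (-a) ↔ IsSquare a :=
  ⟨fun ha => by simpa using h.mul ha, fun ha => by simpa using h.mul ha⟩

theorem isSquare_mul_sq_iff {K : Type*} [Field K] {a s : K} (hs : s ≠ 0) :
    IsSquare (a * s ^ 2) ↔ IsSquare a := by
  refine ⟨fun ⟨t, ht⟩ => ⟨t / s, ?_⟩, fun ha => ha.mul (IsSquare.sq s)⟩
  field_simp
  linear_combination ht

theorem not_isSquare_of_sq_eq_neg_one {K : Type*} [Field K] (h2 : ¬IsSquare (2 : K)) {i : K}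
    (hi : i ^ 2 = -1) : ¬IsSquare i := by
  rintro ⟨k, rfl⟩
  have hk : k ≠ 0 := by
    rintro rfl
    simp at hi
  -- `(1 + i)² = 2i`
  refine h2 ⟨(1 + k * k) / k, ?_⟩
  field_simp
  linear_combination (-1 : K) * hi

theorem FiniteField.xor_isSquare_of_not_isSquare_mul {F : Type*} [Field F] [Fintype F] {x y : F}
    (h : ¬IsSquare (x * y)) : Xor (IsSquare x) (IsSquare y) := by
  classical
  have hx : x ≠ 0 := by rintro rfl; simp at h
  have hy : y ≠ 0 := by rintro rfl; simp at h
  have hχ : quadraticChar F x * quadraticChar F y = -1 := by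
    rw [← map_mul, quadraticChar_neg_one_iff_not_isSquare.mpr h]
  rw [← quadraticChar_one_iff_isSquare hx, ← quadraticChar_one_iff_isSquare hy]
  rcases quadraticChar_dichotomy hx with h1 | h1 <;>
    rcases quadraticChar_dichotomy hy with h2 | h2 <;>
    simp_all [Xor]

namespace AGM

variable {K : Type*} [Field K]

theorem Nontriv.child {a b c d : K} (h : Nontriv (a, b)) (hc : 2 * c = a + b)
    (hd : d ^ 2 = a * b) : Nontriv (c, d) := by
  obtain ⟨ha, hb, hab, hab'⟩ := h
  have key : 4 * ((c + d) * (c - d)) = (a - b) ^ 2 := by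
    linear_combination (2 * c + a + b) * hc - 4 * hd
  have hcd : (c + d) * (c - d) ≠ 0 :=
    right_ne_zero_of_mul (key ▸ pow_ne_zero 2 hab')
  refine ⟨?_, ?_, left_ne_zero_of_mul hcd, right_ne_zero_of_mul hcd⟩
  · rintro rfl
    exact hab (by linear_combination -hc)
  · rintro rfl
    exact mul_ne_zero ha hb (by linear_combination -hd)

theorem AdvN.nontriv {n : ℕ} {p : K × K} (h : AdvN n p) : Nontriv p := by
  cases n with
  | zero => exact h
  | succ n => obtain ⟨_, hp, _⟩ := h; exact hp.1

theorem advN_succ_iff (h2 : (2 : K) ≠ 0) {n : ℕ} {a b : K} :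
    AdvN (n + 1) (a, b) ↔ Nontriv (a, b) ∧ ∃ d, d ^ 2 = a * b ∧ AdvN n ((a + b) / 2, d) := by
  have hc : 2 * ((a + b) / 2) = a + b := mul_div_cancel₀ _ h2
  constructor
  · rintro ⟨⟨c, d⟩, ⟨hp, -, hc', hd⟩, hn⟩
    obtain rfl : c = (a + b) / 2 := mul_left_cancel₀ h2 (hc'.trans hc.symm)
    exact ⟨hp, d, hd, hn⟩
  · rintro ⟨hp, d, hd, hn⟩
    exact ⟨((a + b) / 2, d), ⟨hp, hp.child hc hd, hc, hd⟩, hn⟩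

theorem Nontriv.advN_one_iff (h2 : (2 : K) ≠ 0) {a b : K} (h : Nontriv (a, b)) :
    AdvN 1 (a, b) ↔ IsSquare (a * b) := by
  rw [advN_succ_iff h2]
  refine ⟨fun ⟨_, d, hd, _⟩ => ⟨d, hd ▸ sq d⟩, fun ⟨d, hd⟩ => ⟨h, d, ?_, ?_⟩⟩
  · rw [hd, sq]
  · exact h.child (mul_div_cancel₀ _ h2) (by rw [hd, sq])

theorem Nontriv.advN_two_iff (h2 : (2 : K) ≠ 0) (hneg : IsSquare (-1 : K)) {a b f : K}
    (h : Nontriv (a, b)) (hf : f ^ 2 = a * b) :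
    AdvN 2 (a, b) ↔ IsSquare ((a + b) / 2 * f) := by
  have hc : 2 * ((a + b) / 2) = a + b := mul_div_cancel₀ _ h2
  rw [advN_succ_iff h2]
  constructor
  · rintro ⟨-, d, hd, hn⟩
    rw [(h.child hc hd).advN_one_iff h2] at hn
    rcases sq_eq_sq_iff_eq_or_eq_neg.mp (hd.trans hf.symm) with rfl | rfl
    · exact hn
    · rwa [mul_neg, hneg.isSquare_neg_iff] at hn
  · intro hsq
    exact ⟨h, f, hf, ((h.child hc hf).advN_one_iff h2).mpr hsq⟩

end AGM

theorem stmt2 {F : Type*} [Field F] [Fintype F] (q : ℕ)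
    (hq : Fintype.card F = q) (h5 : q % 8 = 5)
    (a₀ b₀ a₁ b₁ : F) (hadv : AGM.AdvN 2 (a₀, b₀))
    (hb : b₁ ^ 2 = a₀ * b₀) (ha : a₁ = (a₀ + b₀) / 2) :
    Xor' (AGM.AdvN 2 (a₁, b₁)) (AGM.AdvN 2 (a₁, -b₁)) := by
  have htwo : ¬IsSquare (2 : F) := by rw [FiniteField.isSquare_two_iff]; omega
  have hneg : IsSquare (-1 : F) := by rw [FiniteField.isSquare_neg_one_iff]; omega
  have h2 : (2 : F) ≠ 0 := fun h => htwo (h ▸ IsSquare.zero)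
  obtain ⟨i, hi⟩ := hneg
  have hi2 : i ^ 2 = -1 := by rw [hi, sq]
  have h₀ := hadv.nontriv
  have ha₁ : 2 * a₁ = a₀ + b₀ := by rw [ha]; exact mul_div_cancel₀ _ h2
  obtain ⟨f, hf⟩ : IsSquare (a₁ * b₁) := ha ▸ (h₀.advN_two_iff h2 ⟨i, hi⟩ hb).mp hadv
  have hc₁ := h₀.child ha₁ hb
  have hc₂ := h₀.child ha₁ (d := -b₁) (by rw [neg_sq, hb])
  have hf0 : f ≠ 0 := by
    rintro rfl
    exact mul_ne_zero hc₁.1 hc₁.2.1 (by simpa using hf)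
  rw [hc₁.advN_two_iff h2 ⟨i, hi⟩ (f := f) (by rw [sq, hf]),
    hc₂.advN_two_iff h2 ⟨i, hi⟩ (f := i * f) (by linear_combination f ^ 2 * hi2 + hf)]
  apply FiniteField.xor_isSquare_of_not_isSquare_mul
  have h4 : (4 : F) ≠ 0 := by simpa [show (4 : F) = 2 * 2 by norm_num] using h2
  have hs : (a₀ - b₀) * f / 4 ≠ 0 := div_ne_zero (mul_ne_zero h₀.2.2.2 hf0) h4
  have hprod : (a₁ + b₁) / 2 * f * ((a₁ + -b₁) / 2 * (i * f)) = i * ((a₀ - b₀) * f / 4) ^ 2 := by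
    subst ha
    field_simp
    linear_combination (-64 * i) * hb
  rw [hprod, isSquare_mul_sq_iff hs]
  exact not_isSquare_of_sq_eq_neg_one htwo hi2
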